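/- Let b ≥ 0, t > 0, and let f : ℕ → [0,∞) satisfy f(n) ≥ bn for all n ≥ 1 and f(n)/n → b as n → ∞. Define F_t(z) := e^{−t f(0)} + Σ_{n≥1} e^{−t f(n)} z^n / n! for z ≥ 0. Let 1 < p < q < ∞, set q' := q/(q−1), and assume q > 1 + (p−1) e^{2bt}. Then sup_{τ₁>0, τ₂>0} exp( −((p−1)τ₁² + (q'−1)τ₂²)/4 ) · F_t(τ₁τ₂/2) = +∞. -/

import Mathlib

/-!
Since `f n / n → b`, for every `s < e^{-bt}` we have `e^{-t f(n)} ≥ sⁿ` for all large `n`, so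
`F_t(z) ≥ e^{sz} - P(sz)` with `P` a truncated exponential series. Along the ray
`τ₁ = √(y/c₁)`, `τ₂ = √(y/c₂)` (where `c₁ = p - 1`, `c₂ = q' - 1`) the Gaussian factor equals
`e^{-y/2}` and `τ₁τ₂/2 = y / (2√(c₁c₂))`. The hypothesis on `q` says exactly `c₁c₂ < e^{-2bt}`,
so `s` can be taken with `s / (2√(c₁c₂)) > 1/2`, and the product then grows exponentially in `y`.
-/

open Filter Real Finset
open scoped Nat Topology

/-- `F_t(z)` of the paper. -/
noncomputable def weightedExp (t : ℝ) (f : ℕ → ℝ) (z : ℝ) : ℝ :=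
  exp (-t * f 0) + ∑' n : ℕ, exp (-t * f (n + 1)) * z ^ (n + 1) / (n + 1)!

lemma exp_sub_sum_range_le_tsum {c : ℕ → ℝ} {s z : ℝ} {N : ℕ} (hz : 0 ≤ z)
    (hc : ∀ n, 0 ≤ c n) (hsum : Summable fun n => c n * z ^ n / n !)
    (hN : ∀ n ≥ N, s ^ n ≤ c n) :
    exp (s * z) - ∑ n ∈ range N, (s * z) ^ n / n ! ≤ ∑' n, c n * z ^ n / n ! := by
  have hexp := (Real.summable_pow_div_factorial (s * z)).sum_add_tsum_nat_add N
  rw [show ∑' n, (s * z) ^ n / n ! = exp (s * z) by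
    rw [Real.exp_eq_exp_ℝ, NormedSpace.exp_eq_tsum_div]] at hexp
  have htail : ∑' k, (s * z) ^ (k + N) / (k + N)! ≤ ∑' k, c (k + N) * z ^ (k + N) / (k + N)! :=
    Summable.tsum_le_tsum (fun k => by
        rw [mul_pow]
        gcongr
        exact hN _ (Nat.le_add_left N k))
      ((summable_nat_add_iff N).2 (Real.summable_pow_div_factorial _))
      ((summable_nat_add_iff N).2 hsum)
  have hhead : 0 ≤ ∑ n ∈ range N, c n * z ^ n / n ! :=
    sum_nonneg fun n _ => by have := hc n; positivity
  rw [← hsum.sum_add_tsum_nat_add N]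
  linarith

lemma exp_sub_sum_range_le_weightedExp {t s z : ℝ} {f : ℕ → ℝ} {N : ℕ} (ht : 0 ≤ t)
    (hf : ∀ n, 0 ≤ f n) (hz : 0 ≤ z) (hN : ∀ n ≥ N, s ^ n ≤ exp (-t * f n)) :
    exp (s * z) - ∑ n ∈ range N, (s * z) ^ n / n ! ≤ weightedExp t f z := by
  have hsum : Summable fun n => exp (-t * f n) * z ^ n / n ! :=
    (Real.summable_pow_div_factorial z).of_nonneg_of_le (fun n => by positivity) fun n => by
      rw [mul_div_assoc]
      exact mul_le_of_le_one_left (by positivity) (exp_le_one_iff.2 (by nlinarith [hf n]))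
  calc _ ≤ _ := exp_sub_sum_range_le_tsum hz (fun n => (exp_pos _).le) hsum hN
    _ = weightedExp t f z := by rw [hsum.tsum_eq_zero_add]; simp [weightedExp]

lemma eventually_pow_le_exp_neg_mul {f : ℕ → ℝ} {b t s : ℝ}
    (hlim : Tendsto (fun n : ℕ => f n / n) atTop (𝓝 b)) (hs : 0 < s) (hsb : s < exp (-t * b)) :
    ∀ᶠ n : ℕ in atTop, s ^ n ≤ exp (-t * f n) := by
  have hlog : log s < -t * b := by rwa [log_lt_iff_lt_exp hs]
  filter_upwards [(hlim.const_mul (-t)).eventually (lt_mem_nhds hlog), eventually_ge_atTop 1]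
    with n hn hn1
  have hn0 : (0 : ℝ) < n := by exact_mod_cast hn1
  rw [← mul_div_assoc, lt_div_iff₀ hn0] at hn
  calc s ^ n = exp (n * log s) := by rw [exp_nat_mul, exp_log hs]
    _ ≤ exp (-t * f n) := exp_le_exp.2 (by linarith)

lemma tendsto_exp_neg_mul_mul_exp_sub_sum_range {c a : ℝ} (hc : 0 < c) (hca : c < a) (N : ℕ) :
    Tendsto (fun y => exp (-c * y) * (exp (a * y) - ∑ n ∈ range N, (a * y) ^ n / n !))
      atTop atTop := by
  have hexp : Tendsto (fun y => exp ((a - c) * y)) atTop atTop :=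
    tendsto_exp_atTop.comp (tendsto_id.const_mul_atTop (sub_pos.2 hca))
  have hpoly : Tendsto (fun y => -∑ n ∈ range N, a ^ n / n ! * (y ^ (n : ℝ) * exp (-c * y)))
      atTop (𝓝 0) := by
    simpa using (tendsto_finsetSum _ fun (n : ℕ) _ =>
      (tendsto_rpow_mul_exp_neg_mul_atTop_nhds_zero n c hc).const_mul (a ^ n / n !)).neg
  refine (hexp.atTop_add hpoly).congr fun y => ?_
  rw [mul_sub, ← exp_add, mul_sum, ← sub_eq_add_neg]
  congr 1
  · ring_nf
  · exact sum_congr rfl fun n _ => by rw [rpow_natCast]; ring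

lemma iSup_pos_pos_eq_top_of_tendsto {α : Type*} {l : Filter α} [l.NeBot] {g : ℝ → ℝ → ℝ}
    {u v : α → ℝ} (hu : ∀ᶠ y in l, 0 < u y) (hv : ∀ᶠ y in l, 0 < v y)
    (h : Tendsto (fun y => g (u y) (v y)) l atTop) :
    (⨆ (τ₁ : ℝ) (_ : 0 < τ₁) (τ₂ : ℝ) (_ : 0 < τ₂), (g τ₁ τ₂ : EReal)) = ⊤ :=
  top_le_iff.1 <| le_of_tendsto (EReal.tendsto_coe_atTop.comp h) <| by
    filter_upwards [hu, hv] with y huy hvy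
    exact le_iSup₂_of_le (u y) huy (le_iSup₂_of_le (v y) hvy le_rfl)

lemma tendsto_gaussian_mul_weightedExp {b t c₁ c₂ : ℝ} {f : ℕ → ℝ} (ht : 0 ≤ t)
    (hf : ∀ n, 0 ≤ f n) (hlim : Tendsto (fun n : ℕ => f n / n) atTop (𝓝 b))
    (hc₁ : 0 < c₁) (hc₂ : 0 < c₂) (hc : c₁ * c₂ < exp (-t * b) ^ 2) :
    Tendsto (fun y => exp (-(c₁ * (√y / √c₁) ^ 2 + c₂ * (√y / √c₂) ^ 2) / 4) *
      weightedExp t f (√y / √c₁ * (√y / √c₂) / 2)) atTop atTop := by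
  have hm : 0 < √c₁ * √c₂ := mul_pos (sqrt_pos.2 hc₁) (sqrt_pos.2 hc₂)
  have hmb : √c₁ * √c₂ < exp (-t * b) := by rwa [← sqrt_mul hc₁.le, sqrt_lt' (exp_pos _)]
  obtain ⟨s, hs, hsb⟩ := exists_between hmb
  obtain ⟨N, hN⟩ := eventually_atTop.1 (eventually_pow_le_exp_neg_mul hlim (hm.trans hs) hsb)
  set κ := (2 * (√c₁ * √c₂))⁻¹
  have hsκ : 1 / 2 < s * κ := by
    rw [← div_eq_mul_inv, lt_div_iff₀ (by positivity)]
    linarith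
  refine tendsto_atTop_mono' _ ?_
    (tendsto_exp_neg_mul_mul_exp_sub_sum_range one_half_pos hsκ N)
  filter_upwards [eventually_ge_atTop 0] with y hy
  have hprod : √y / √c₁ * (√y / √c₂) / 2 = κ * y := by
    rw [div_mul_div_comm, mul_self_sqrt hy]
    ring
  have hgauss : -(c₁ * (√y / √c₁) ^ 2 + c₂ * (√y / √c₂) ^ 2) / 4 = -(1 / 2) * y := by
    rw [div_pow, div_pow, sq_sqrt hy, sq_sqrt hc₁.le, sq_sqrt hc₂.le]
    field_simp
    ring
  rw [hprod, hgauss]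
  gcongr
  simpa only [mul_assoc] using
    exp_sub_sum_range_le_weightedExp ht (z := κ * y) hf (by positivity) hN

theorem stmt18_general (b t p q : ℝ) (ht : 0 < t) (f : ℕ → ℝ)
    (hf0 : ∀ n, 0 ≤ f n)
    (hlim : Tendsto (fun n : ℕ => f n / n) atTop (nhds b))
    (hp : 1 < p) (hq : 1 + (p-1) * Real.exp (2*b*t) < q) :
    (⨆ (τ₁ : ℝ) (_ : 0 < τ₁) (τ₂ : ℝ) (_ : 0 < τ₂),
      ((Real.exp (-((p-1)*τ₁^2 + (q/(q-1) - 1)*τ₂^2)/4) *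
        (Real.exp (-t * f 0) +
          ∑' n : ℕ, Real.exp (-t * f (n+1)) * (τ₁*τ₂/2)^(n+1) / (n+1).factorial) : ℝ) : EReal))
      = ⊤ := by
  have hq₁ : 0 < q - 1 := by nlinarith [exp_pos (2 * b * t)]
  have hc₁ : 0 < p - 1 := sub_pos.2 hp
  have hc₂ : q / (q - 1) - 1 = (q - 1)⁻¹ := by field_simp; ring
  have hc₂pos : 0 < q / (q - 1) - 1 := hc₂ ▸ inv_pos.2 hq₁
  have hc : (p - 1) * (q / (q - 1) - 1) < exp (-t * b) ^ 2 := by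
    rw [hc₂, ← exp_nat_mul, ← div_eq_mul_inv, div_lt_iff₀ hq₁,
      show ((2 : ℕ) : ℝ) * (-t * b) = -(2 * b * t) by push_cast; ring, exp_neg,
      inv_mul_eq_div, lt_div_iff₀ (exp_pos _)]
    linarith
  refine iSup_pos_pos_eq_top_of_tendsto (l := atTop)
    (g := fun τ₁ τ₂ => exp (-((p - 1) * τ₁ ^ 2 + (q / (q - 1) - 1) * τ₂ ^ 2) / 4) *
      weightedExp t f (τ₁ * τ₂ / 2)) ?_ ?_
    (tendsto_gaussian_mul_weightedExp ht.le hf0 hlim hc₁ hc₂pos hc)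
  · filter_upwards [eventually_gt_atTop 0] with y hy
      using div_pos (sqrt_pos.2 hy) (sqrt_pos.2 hc₁)
  · filter_upwards [eventually_gt_atTop 0] with y hy
      using div_pos (sqrt_pos.2 hy) (sqrt_pos.2 hc₂pos)

/-- Let b ≥ 0, t > 0 and f : ℕ → [0,∞) with f(n) ≥ bn for n ≥ 1 and
f(n)/n → b, and let `F_t(z) := e^{−t f(0)} + Σ_{n≥1} e^{−t f(n)} z^n/n!`. If 1 < p < q < ∞,
q' = q/(q−1) and q > 1 + (p−1) e^{2bt}, then
`sup_{τ₁,τ₂>0} exp(−((p−1)τ₁² + (q'−1)τ₂²)/4) F_t(τ₁τ₂/2) = +∞`. -/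
theorem stmt18 (b t p q : ℝ) (hb : 0 ≤ b) (ht : 0 < t) (f : ℕ → ℝ)
    (hf0 : ∀ n, 0 ≤ f n) (hfb : ∀ n : ℕ, 1 ≤ n → b * n ≤ f n)
    (hlim : Tendsto (fun n : ℕ => f n / n) atTop (nhds b))
    (hp : 1 < p) (hpq : p < q) (hq : 1 + (p-1) * Real.exp (2*b*t) < q) :
    (⨆ (τ₁ : ℝ) (_ : 0 < τ₁) (τ₂ : ℝ) (_ : 0 < τ₂),
      ((Real.exp (-((p-1)*τ₁^2 + (q/(q-1) - 1)*τ₂^2)/4) *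
        (Real.exp (-t * f 0) +
          ∑' n : ℕ, Real.exp (-t * f (n+1)) * (τ₁*τ₂/2)^(n+1) / (n+1).factorial) : ℝ) : EReal))
      = ⊤ :=
  stmt18_general b t p q ht f hf0 hlim hp hq
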